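/- Let K be a bounded, C_0, characteristic kernel on ℝ^d, f an entropy function such that 1 is the unique minimizer of f, and λ > 0. Then the MMD-regularized f-divergence is a divergence: for all μ, ν ∈ M_+(ℝ^d), D^λ_f(μ|ν) ≥ 0, and D^λ_f(μ|ν) = 0 if and only if μ = ν. -/

import Mathlib

open MeasureTheory ENNReal Filter Topology Set
open scoped ZeroAtInfty RealInnerProductSpace BoundedContinuousFunction

noncomputable section

/-- Euclidean space `ℝ^d`. -/
abbrev Rd (d : ℕ) : Type := EuclideanSpace ℝ (Fin d)

/-- An entropy function: a proper, convex, lower semicontinuous `f : ℝ → [0,∞]`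
with `f x = ∞` for `x < 0` and `f 1 = 0` (properness is automatic from `f 1 = 0`). -/
structure IsEntropy (f : ℝ → ℝ≥0∞) : Prop where
  convex : ∀ x y a b : ℝ, 0 ≤ a → 0 ≤ b → a + b = 1 →
    f (a * x + b * y) ≤ ENNReal.ofReal a * f x + ENNReal.ofReal b * f y
  lsc : LowerSemicontinuous f
  top_of_neg : ∀ x : ℝ, x < 0 → f x = ⊤
  one_eq_zero : f 1 = 0

/-- `1` is the unique minimizer of the entropy function `f`, i.e. `f t > 0` for `t ≠ 1`. -/
def UniqueMinOne (f : ℝ → ℝ≥0∞) : Prop := ∀ t : ℝ, t ≠ 1 → 0 < f t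

/-- The recession constant `f'_∞ = lim_{t → ∞} f t / t` (the limit exists for convex `f`,
so it coincides with the `limsup`). -/
noncomputable def recession (f : ℝ → ℝ≥0∞) : ℝ≥0∞ :=
  Filter.limsup (fun t : ℝ => f t / ENNReal.ofReal t) Filter.atTop

/-- The `f`-divergence of finite nonnegative measures:
`D_f(μ|ν) = ∫ f(dμ/dν) dν + f'_∞ · μˢ(ℝ^d)` where `μ = (dμ/dν) ν + μˢ`
is the Lebesgue decomposition of `μ` w.r.t. `ν` (convention `0 ⬝ ∞ = 0`). -/
noncomputable def fDiv {d : ℕ} (f : ℝ → ℝ≥0∞) (μ ν : Measure (Rd d)) : ℝ≥0∞ :=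
  ∫⁻ x, f ((μ.rnDeriv ν x).toReal) ∂ν + recession f * μ.singularPart ν Set.univ

/-- A kernel on `ℝ^d`: symmetric, positive definite, bounded, and with
`K x · ∈ C₀(ℝ^d)` for every `x`. -/
structure IsKernel {d : ℕ} (K : Rd d → Rd d → ℝ) : Prop where
  symm : ∀ x y, K x y = K y x
  posdef : ∀ (n : ℕ) (x : Fin n → Rd d) (a : Fin n → ℝ),
    0 ≤ ∑ i, ∑ j, a i * a j * K (x i) (x j)
  bounded : ∃ C : ℝ, ∀ x, K x x ≤ C
  cont : ∀ x, Continuous (K x)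
  zero_at_infty : ∀ x, Tendsto (K x) (Filter.cocompact (Rd d)) (𝓝 0)

/-- Integral of a function against a finite signed measure, via the Jordan decomposition. -/
noncomputable def sIntegral {d : ℕ} (α : SignedMeasure (Rd d)) (g : Rd d → ℝ) : ℝ :=
  ∫ x, g x ∂α.toJordanDecomposition.posPart - ∫ x, g x ∂α.toJordanDecomposition.negPart

/-- Squared MMD of two finite signed measures: `∬ K(x,y) d(α−β)(x) d(α−β)(y)`. -/
noncomputable def mmdSq {d : ℕ} (K : Rd d → Rd d → ℝ) (α β : SignedMeasure (Rd d)) : ℝ :=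
  sIntegral (α - β) (fun x => sIntegral (α - β) (fun y => K x y))

/-- The maximum mean discrepancy `d_K` of two finite signed measures. -/
noncomputable def mmd {d : ℕ} (K : Rd d → Rd d → ℝ) (α β : SignedMeasure (Rd d)) : ℝ :=
  Real.sqrt (mmdSq K α β)

/-- A kernel is characteristic if `d_K(α,β) = 0` implies `α = β` for finite signed
measures `α, β`. -/
def Characteristic {d : ℕ} (K : Rd d → Rd d → ℝ) : Prop :=
  ∀ α β : SignedMeasure (Rd d), mmd K α β = 0 → α = β

/-- Squared MMD of two finite nonnegative measures:
`d_K(α,β)² = ∬K dα dα − 2 ∬K dβ dα + ∬K dβ dβ`. -/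
noncomputable def mmdSqM {d : ℕ} (K : Rd d → Rd d → ℝ) (α β : Measure (Rd d)) : ℝ :=
  (∫ x, (∫ y, K x y ∂α) ∂α) - 2 * (∫ x, (∫ y, K x y ∂β) ∂α) + ∫ x, (∫ y, K x y ∂β) ∂β

/-- The MMD `d_K` of two finite nonnegative measures. -/
noncomputable def mmdM {d : ℕ} (K : Rd d → Rd d → ℝ) (α β : Measure (Rd d)) : ℝ :=
  Real.sqrt (mmdSqM K α β)

/-- The MMD-regularized `f`-divergence `D^λ_{f,ν}(μ)` of a finite nonnegative measure `μ`:
`inf_{σ ∈ M₊} D_f(σ|ν) + (1/(2λ)) d_K(μ,σ)²`. -/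
noncomputable def regFDivM {d : ℕ} (K : Rd d → Rd d → ℝ) (f : ℝ → ℝ≥0∞)
    (ν : Measure (Rd d)) (lam : ℝ) (μ : Measure (Rd d)) : ℝ≥0∞ :=
  ⨅ σ : {σ : Measure (Rd d) // IsFiniteMeasure σ},
    fDiv f σ.1 ν + ENNReal.ofReal (mmdSqM K μ σ.1 / (2 * lam))

/-!
If `D^λ_f(μ|ν) = 0`, there are finite measures `σ` for which both `D_f(σ|ν)` and
`d_K(μ,σ)²` are arbitrarily small. As `1` is the unique minimizer of the convex function `f`,
`|t - 1| ≤ ε + D_ε f(t)` for all `t ≥ 0`, and `f'_∞ > 0` controls the singular part; so a small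
`D_f(σ|ν)` forces `σ` to be close to `ν` in total variation. Since `K` is bounded, `d_K(μ,·)²`
is continuous for the total variation, hence `d_K(μ,ν) = 0`, and `μ = ν` as `K` is
characteristic. Conversely `σ = μ = ν` shows `D^λ_f(μ|μ) = 0`.
-/

open scoped NNReal

section TotalVariation

variable {X : Type*} [MeasurableSpace X]

/-- The total variation `|σ - ν|(X)`, computed from the Lebesgue decomposition of `σ`
with respect to `ν`. -/
def tvDist (σ ν : Measure X) : ℝ≥0∞ :=
  ∫⁻ x, ENNReal.ofReal |(σ.rnDeriv ν x).toReal - 1| ∂ν + σ.singularPart ν univ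

theorem toReal_tvDist (σ ν : Measure X) [IsFiniteMeasure σ] [IsFiniteMeasure ν] :
    (tvDist σ ν).toReal =
      ∫ x, |(σ.rnDeriv ν x).toReal - 1| ∂ν + (σ.singularPart ν univ).toReal := by
  have hint : Integrable (fun x => |(σ.rnDeriv ν x).toReal - 1|) ν :=
    (Measure.integrable_toReal_rnDeriv.sub (integrable_const 1)).abs
  rw [tvDist, ← ofReal_integral_eq_lintegral_ofReal hint (ae_of_all _ fun _ => abs_nonneg _),
    ENNReal.toReal_add ENNReal.ofReal_ne_top (measure_ne_top _ _),
    ENNReal.toReal_ofReal (integral_nonneg fun _ => abs_nonneg _)]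

theorem abs_integral_sub_le_tvDist (σ ν : Measure X) [IsFiniteMeasure σ] [IsFiniteMeasure ν]
    {g : X → ℝ} (hg : StronglyMeasurable g) {M : ℝ} (hM : ∀ x, |g x| ≤ M) :
    |∫ x, g x ∂σ - ∫ x, g x ∂ν| ≤ M * (tvDist σ ν).toReal := by
  set ρ : X → ℝ≥0∞ := σ.rnDeriv ν
  have hρ : Measurable ρ := Measure.measurable_rnDeriv σ ν
  have hgσ : Integrable g σ := .of_bound hg.aestronglyMeasurable M (ae_of_all _ hM)
  have hgν : Integrable g ν := .of_bound hg.aestronglyMeasurable M (ae_of_all _ hM)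
  have hgac : Integrable g (ν.withDensity ρ) :=
    hgσ.mono_measure (Measure.withDensity_rnDeriv_le σ ν)
  have hρg : Integrable (fun x => (ρ x).toReal * g x) ν :=
    (integrable_withDensity_iff_integrable_smul' hρ (Measure.rnDeriv_lt_top σ ν)).1 hgac
  have hsplit : ∫ x, g x ∂σ - ∫ x, g x ∂ν =
      ∫ x, g x ∂(σ.singularPart ν) + ∫ x, ((ρ x).toReal - 1) * g x ∂ν := by
    conv_lhs => rw [σ.haveLebesgueDecomposition_add ν]
    rw [integral_add_measure (hgσ.mono_measure (Measure.singularPart_le σ ν)) hgac,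
      integral_withDensity_eq_integral_toReal_smul hρ (Measure.rnDeriv_lt_top σ ν)]
    simp only [smul_eq_mul, sub_mul, one_mul, integral_sub hρg hgν]
    ring
  have hsing : |∫ x, g x ∂(σ.singularPart ν)| ≤ M * (σ.singularPart ν univ).toReal := by
    simpa [measureReal_def, mul_comm] using
      norm_integral_le_of_norm_le_const (μ := σ.singularPart ν) (f := g) (ae_of_all _ hM)
  have hac : |∫ x, ((ρ x).toReal - 1) * g x ∂ν| ≤ M * ∫ x, |(ρ x).toReal - 1| ∂ν := by
    rw [← integral_const_mul, ← Real.norm_eq_abs]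
    refine norm_integral_le_of_norm_le
      ((Measure.integrable_toReal_rnDeriv.sub (integrable_const 1)).abs.const_mul M)
      (ae_of_all _ fun x => ?_)
    rw [Real.norm_eq_abs, abs_mul, mul_comm M]
    exact mul_le_mul_of_nonneg_left (hM x) (abs_nonneg _)
  rw [hsplit, toReal_tvDist, mul_add]
  exact (abs_add_le _ _).trans (by linarith)

theorem measureReal_univ_le_add_tvDist (σ ν : Measure X) [IsFiniteMeasure σ]
    [IsFiniteMeasure ν] : σ.real univ ≤ ν.real univ + (tvDist σ ν).toReal := by
  have h := abs_integral_sub_le_tvDist σ ν stronglyMeasurable_const (g := fun _ => (1 : ℝ))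
    (M := 1) (fun _ => by norm_num)
  simp only [integral_const, smul_eq_mul, mul_one, one_mul] at h
  linarith [(abs_le.1 h).2]

end TotalVariation

namespace IsEntropy

variable {f : ℝ → ℝ≥0∞}

theorem apply_mul_add_one_sub_le (hf : IsEntropy f) {a : ℝ} (ha₀ : 0 ≤ a) (ha₁ : a ≤ 1)
    (s : ℝ) : f (a * s + (1 - a)) ≤ ENNReal.ofReal a * f s := by
  simpa [hf.one_eq_zero] using hf.convex s 1 a (1 - a) ha₀ (by linarith) (by ring)

theorem antitoneOn_Iic (hf : IsEntropy f) : AntitoneOn f (Iic 1) := by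
  intro s hs t ht hst
  rcases eq_or_lt_of_le (mem_Iic.1 hs) with rfl | hs1
  · rw [le_antisymm (mem_Iic.1 ht) hst]
  have key := hf.apply_mul_add_one_sub_le (a := (1 - t) / (1 - s))
    (div_nonneg (by linarith [mem_Iic.1 ht]) (by linarith))
    ((div_le_one (by linarith)).2 (by linarith)) s
  rw [show (1 - t) / (1 - s) * s + (1 - (1 - t) / (1 - s)) = t by field_simp; ring] at key
  exact key.trans (mul_le_of_le_one_left' (ENNReal.ofReal_le_one.2
    ((div_le_one (by linarith)).2 (by linarith))))

theorem monotoneOn_Ici (hf : IsEntropy f) : MonotoneOn f (Ici 1) := by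
  intro s hs t ht hst
  rcases eq_or_lt_of_le (mem_Ici.1 ht) with rfl | ht1
  · rw [le_antisymm hst (mem_Ici.1 hs)]
  have key := hf.apply_mul_add_one_sub_le (a := (s - 1) / (t - 1))
    (div_nonneg (by linarith [mem_Ici.1 hs]) (by linarith))
    ((div_le_one (by linarith)).2 (by linarith)) t
  rw [show (s - 1) / (t - 1) * t + (1 - (s - 1) / (t - 1)) = s by field_simp; ring] at key
  exact key.trans (mul_le_of_le_one_left' (ENNReal.ofReal_le_one.2
    ((div_le_one (by linarith)).2 (by linarith))))

theorem ofReal_sub_one_mul_le (hf : IsEntropy f) {t : ℝ} (ht : 2 ≤ t) :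
    ENNReal.ofReal (t - 1) * f 2 ≤ f t := by
  have ht1 : t - 1 ≠ 0 := by linarith
  have key := hf.apply_mul_add_one_sub_le (a := 1 / (t - 1))
    (div_nonneg zero_le_one (by linarith)) ((div_le_one (by linarith)).2 (by linarith)) t
  rw [show 1 / (t - 1) * t + (1 - 1 / (t - 1)) = 2 by field_simp; ring] at key
  calc ENNReal.ofReal (t - 1) * f 2
      ≤ ENNReal.ofReal (t - 1) * (ENNReal.ofReal (1 / (t - 1)) * f t) := by gcongr
    _ = f t := by
      rw [← mul_assoc, ← ENNReal.ofReal_mul (by linarith), mul_one_div_cancel (by linarith),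
        ENNReal.ofReal_one, one_mul]

theorem exists_ofReal_abs_sub_one_le (hf : IsEntropy f) (hmin : UniqueMinOne f) {ε : ℝ}
    (hε : 0 < ε) :
    ∃ D : ℝ≥0, ∀ t : ℝ, 0 ≤ t → ENNReal.ofReal |t - 1| ≤ ENNReal.ofReal ε + D * f t := by
  -- by monotonicity `c ≤ f t` when `ε ≤ |t - 1| ≤ 1`, and `(t - 1) c ≤ f t` when `t ≥ 2`
  set c := min (min (f (1 - ε)) (f (1 + ε))) (min (f 2) 1)
  have hc₀ : c ≠ 0 := (lt_min (lt_min (hmin _ (by linarith)) (hmin _ (by linarith)))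
    (lt_min (hmin 2 (by norm_num)) one_pos)).ne'
  have hc₁ : c ≠ ⊤ := ((min_le_right _ _).trans (min_le_right _ _) |>.trans_lt one_lt_top).ne
  refine ⟨c⁻¹.toNNReal, fun t ht => ?_⟩
  rw [ENNReal.coe_toNNReal (ENNReal.inv_ne_top.2 hc₀)]
  rcases lt_or_ge |t - 1| ε with hsmall | hlarge
  · exact (ENNReal.ofReal_le_ofReal hsmall.le).trans le_self_add
  refine le_add_left ((ENNReal.mul_le_iff_le_inv hc₀ hc₁).1 ?_)
  rw [mul_comm]
  rcases le_or_gt t 2 with ht2 | ht2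
  · have hc : c ≤ f t := by
      rcases le_or_gt t 1 with ht1 | ht1
      · rw [abs_of_nonpos (by linarith)] at hlarge
        exact (min_le_left _ _).trans <| (min_le_left _ _).trans <|
          hf.antitoneOn_Iic (mem_Iic.2 ht1) (mem_Iic.2 (by linarith)) (by linarith)
      · rw [abs_of_pos (by linarith)] at hlarge
        exact (min_le_left _ _).trans <| (min_le_right _ _).trans <|
          hf.monotoneOn_Ici (mem_Ici.2 (by linarith)) (mem_Ici.2 ht1.le) (by linarith)
    refine le_trans ?_ hc
    exact mul_le_of_le_one_left' (ENNReal.ofReal_le_one.2 (abs_le.2 ⟨by linarith, by linarith⟩))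
  · rw [abs_of_pos (by linarith)]
    refine le_trans ?_ (hf.ofReal_sub_one_mul_le ht2.le)
    gcongr
    exact (min_le_right _ _).trans (min_le_left _ _)

theorem recession_pos (hf : IsEntropy f) (hmin : UniqueMinOne f) : 0 < recession f := by
  have hev : ∀ᶠ t in atTop, f 2 * 2⁻¹ ≤ f t / ENNReal.ofReal t := by
    filter_upwards [eventually_ge_atTop (2 : ℝ)] with t ht
    rw [ENNReal.le_div_iff_mul_le (Or.inl (by simp; linarith)) (Or.inl ENNReal.ofReal_ne_top),
      mul_assoc, mul_comm]
    refine le_trans ?_ (hf.ofReal_sub_one_mul_le ht)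
    gcongr
    rw [← ENNReal.ofReal_ofNat 2, ← ENNReal.ofReal_inv_of_pos (by norm_num),
      ← ENNReal.ofReal_mul (by linarith)]
    exact ENNReal.ofReal_le_ofReal (by linarith)
  exact (ENNReal.mul_pos (hmin 2 (by norm_num)).ne' (by simp)).trans_le
    (le_limsup_of_frequently_le' hev.frequently)

end IsEntropy

section FDivergence

variable {d : ℕ} {f : ℝ → ℝ≥0∞}

theorem fDiv_self (hf : f 1 = 0) (μ : Measure (Rd d)) [SigmaFinite μ] : fDiv f μ μ = 0 := by
  have hae : (fun x => f (μ.rnDeriv μ x).toReal) =ᵐ[μ] 0 := by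
    filter_upwards [Measure.rnDeriv_self μ] with x hx
    simp [hx, hf]
  simp [fDiv, lintegral_congr_ae hae, Measure.singularPart_self]

theorem exists_tvDist_le_fDiv (hf : IsEntropy f) (hmin : UniqueMinOne f) (ν : Measure (Rd d))
    {ε : ℝ} (hε : 0 < ε) :
    ∃ D : ℝ≥0, ∀ σ, tvDist σ ν ≤ ENNReal.ofReal ε * ν univ + D * fDiv f σ ν := by
  obtain ⟨D₁, hD₁⟩ := hf.exists_ofReal_abs_sub_one_le hmin hε
  set r := min (recession f) 1
  have hr₀ : r ≠ 0 := (lt_min (hf.recession_pos hmin) one_pos).ne'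
  have hr₁ : r ≠ ⊤ := (min_le_right _ _ |>.trans_lt one_lt_top).ne
  refine ⟨D₁ + r⁻¹.toNNReal, fun σ => ?_⟩
  have hac : ∫⁻ x, ENNReal.ofReal |(σ.rnDeriv ν x).toReal - 1| ∂ν ≤
      ENNReal.ofReal ε * ν univ + D₁ * ∫⁻ x, f (σ.rnDeriv ν x).toReal ∂ν := by
    rw [← lintegral_const, ← lintegral_const_mul' _ _ ENNReal.coe_ne_top,
      ← lintegral_add_left measurable_const]
    exact lintegral_mono fun x => hD₁ _ ENNReal.toReal_nonneg
  have hsing : σ.singularPart ν univ ≤ r⁻¹.toNNReal * (recession f * σ.singularPart ν univ) := by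
    rw [ENNReal.coe_toNNReal (ENNReal.inv_ne_top.2 hr₀), ← ENNReal.mul_le_iff_le_inv hr₀ hr₁]
    gcongr
    exact min_le_left _ _
  calc tvDist σ ν
      ≤ ENNReal.ofReal ε * ν univ + D₁ * ∫⁻ x, f (σ.rnDeriv ν x).toReal ∂ν
        + r⁻¹.toNNReal * (recession f * σ.singularPart ν univ) := add_le_add hac hsing
    _ ≤ ENNReal.ofReal ε * ν univ + ↑(D₁ + r⁻¹.toNNReal) * fDiv f σ ν := by
      rw [add_assoc, fDiv, ENNReal.coe_add, add_mul, mul_add, mul_add]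
      gcongr
      exacts [le_self_add, le_add_self]

theorem exists_tvDist_le_of_fDiv_lt (hf : IsEntropy f) (hmin : UniqueMinOne f)
    (ν : Measure (Rd d)) [IsFiniteMeasure ν] {η : ℝ} (hη : 0 < η) :
    ∃ e > 0, ∀ σ, fDiv f σ ν < ENNReal.ofReal e → tvDist σ ν ≤ ENNReal.ofReal η := by
  set ε := η / (2 * (ν.real univ + 1))
  obtain ⟨D, hD⟩ := exists_tvDist_le_fDiv hf hmin ν (ε := ε) (by positivity)
  refine ⟨η / (2 * (D + 1)), by positivity, fun σ hσ => (hD σ).trans ?_⟩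
  have hεν : ε * ν.real univ ≤ η / 2 := by
    rw [div_mul_eq_mul_div, div_le_div_iff₀ (by positivity) two_pos]
    nlinarith [measureReal_nonneg (μ := ν) (s := univ)]
  have hDe : D * (η / (2 * (D + 1))) ≤ η / 2 := by
    rw [mul_div_assoc', div_le_div_iff₀ (by positivity) two_pos]
    nlinarith [D.coe_nonneg]
  calc ENNReal.ofReal ε * ν univ + D * fDiv f σ ν
      ≤ ENNReal.ofReal ε * ENNReal.ofReal (ν.real univ) + ENNReal.ofReal D *
          ENNReal.ofReal (η / (2 * (D + 1))) := by
        rw [ofReal_measureReal (measure_ne_top _ _), ENNReal.ofReal_coe_nnreal]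
        gcongr
    _ ≤ ENNReal.ofReal η := by
      rw [← ENNReal.ofReal_mul (by positivity), ← ENNReal.ofReal_mul D.coe_nonneg,
        ← ENNReal.ofReal_add (by positivity) (by positivity)]
      exact ENNReal.ofReal_le_ofReal (by linarith)

end FDivergence

theorem sIntegral_toSignedMeasure_sub {d : ℕ} (μ ν : Measure (Rd d)) [IsFiniteMeasure μ]
    [IsFiniteMeasure ν] {g : Rd d → ℝ} (hg : StronglyMeasurable g) {M : ℝ}
    (hM : ∀ x, |g x| ≤ M) :
    sIntegral (μ.toSignedMeasure - ν.toSignedMeasure) g = ∫ x, g x ∂μ - ∫ x, g x ∂ν := by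
  set j := (μ.toSignedMeasure - ν.toSignedMeasure).toJordanDecomposition
  have hint : ∀ (ξ : Measure (Rd d)) [IsFiniteMeasure ξ], Integrable g ξ :=
    fun _ _ => .of_bound hg.aestronglyMeasurable M (ae_of_all _ hM)
  have hjordan : j.posPart + ν = μ + j.negPart := by
    ext s hs
    have h := congrArg (· s)
      (μ.toSignedMeasure - ν.toSignedMeasure).toSignedMeasure_toJordanDecomposition
    simp only [JordanDecomposition.toSignedMeasure, sub_apply,
      Measure.toSignedMeasure_apply_measurable hs, measureReal_def] at h
    rw [Measure.add_apply, Measure.add_apply,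
      ← ENNReal.toReal_eq_toReal_iff' (by finiteness) (by finiteness),
      ENNReal.toReal_add (by finiteness) (by finiteness),
      ENNReal.toReal_add (by finiteness) (by finiteness)]
    linarith
  have hsum := congrArg (fun ξ => ∫ x, g x ∂ξ) hjordan
  simp only [integral_add_measure (hint _) (hint _)] at hsum
  rw [sIntegral]
  linarith

namespace IsKernel

variable {d : ℕ} {K : Rd d → Rd d → ℝ}

theorem exists_abs_le (hK : IsKernel K) : ∃ C, ∀ x y, |K x y| ≤ C := by
  obtain ⟨C, hC⟩ := hK.bounded
  refine ⟨C, fun x y => abs_le.2 ?_⟩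
  -- the Gram matrices of `(x, y)` tested against `(1, ±1)` give `2 |K x y| ≤ K x x + K y y`
  have h₁ := hK.posdef 2 ![x, y] ![1, 1]
  have h₂ := hK.posdef 2 ![x, y] ![1, -1]
  simp only [Fin.sum_univ_two, Matrix.cons_val_zero, Matrix.cons_val_one, hK.symm y x] at h₁ h₂
  constructor <;> linarith [hC x, hC y]

theorem stronglyMeasurable_uncurry (hK : IsKernel K) :
    StronglyMeasurable (Function.uncurry K) :=
  stronglyMeasurable_uncurry_of_continuous_of_stronglyMeasurable
    (fun y => by simpa only [hK.symm _ y] using hK.cont y)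
    (fun x => (hK.cont x).stronglyMeasurable)

theorem stronglyMeasurable_integral (hK : IsKernel K) (β : Measure (Rd d)) [SFinite β] :
    StronglyMeasurable (fun x => ∫ y, K x y ∂β) :=
  hK.stronglyMeasurable_uncurry.integral_prod_right'

theorem abs_integral_le {C : ℝ} (hC : ∀ x y, |K x y| ≤ C) (β : Measure (Rd d))
    [IsFiniteMeasure β] (x : Rd d) : |∫ y, K x y ∂β| ≤ C * β.real univ := by
  simpa [mul_comm] using norm_integral_le_of_norm_le_const (μ := β) (f := K x) (ae_of_all _ (hC x))

theorem integrable_integral (hK : IsKernel K) {C : ℝ} (hC : ∀ x y, |K x y| ≤ C)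
    (α β : Measure (Rd d)) [IsFiniteMeasure α] [IsFiniteMeasure β] :
    Integrable (fun x => ∫ y, K x y ∂β) α :=
  .of_bound (hK.stronglyMeasurable_integral β).aestronglyMeasurable _
    (ae_of_all _ (abs_integral_le hC β))

theorem integral_integral_comm (hK : IsKernel K) {C : ℝ} (hC : ∀ x y, |K x y| ≤ C)
    (α β : Measure (Rd d)) [IsFiniteMeasure α] [IsFiniteMeasure β] :
    ∫ x, ∫ y, K x y ∂β ∂α = ∫ x, ∫ y, K x y ∂α ∂β := by
  have hint : Integrable (Function.uncurry K) (α.prod β) :=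
    .of_bound hK.stronglyMeasurable_uncurry.aestronglyMeasurable C
      (ae_of_all _ fun p => hC p.1 p.2)
  rw [integral_integral_swap hint]
  simp_rw [hK.symm]

theorem mmdSq_toSignedMeasure (hK : IsKernel K) (μ ν : Measure (Rd d)) [IsFiniteMeasure μ]
    [IsFiniteMeasure ν] : mmdSq K μ.toSignedMeasure ν.toSignedMeasure = mmdSqM K μ ν := by
  obtain ⟨C, hC⟩ := hK.exists_abs_le
  have hinner : ∀ x, sIntegral (μ.toSignedMeasure - ν.toSignedMeasure) (fun y => K x y) =
      ∫ y, K x y ∂μ - ∫ y, K x y ∂ν :=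
    fun x => sIntegral_toSignedMeasure_sub μ ν (hK.cont x).stronglyMeasurable (hC x)
  rw [mmdSq, funext hinner, sIntegral_toSignedMeasure_sub μ ν
      (g := fun x => ∫ y, K x y ∂μ - ∫ y, K x y ∂ν)
      ((hK.stronglyMeasurable_integral μ).sub (hK.stronglyMeasurable_integral ν))
      (fun x => (abs_sub _ _).trans (add_le_add (abs_integral_le hC μ x) (abs_integral_le hC ν x))),
    integral_sub (hK.integrable_integral hC μ μ) (hK.integrable_integral hC μ ν),
    integral_sub (hK.integrable_integral hC ν μ) (hK.integrable_integral hC ν ν), mmdSqM,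
    hK.integral_integral_comm hC ν μ]
  ring

end IsKernel

section Regularized

variable {d : ℕ} {K : Rd d → Rd d → ℝ} {f : ℝ → ℝ≥0∞}

theorem abs_mmdSqM_sub_le (hK : IsKernel K) {C : ℝ} (hC : ∀ x y, |K x y| ≤ C)
    (μ σ ν : Measure (Rd d)) [IsFiniteMeasure μ] [IsFiniteMeasure σ] [IsFiniteMeasure ν] :
    |mmdSqM K μ σ - mmdSqM K μ ν| ≤
      C * (tvDist σ ν).toReal * (2 * μ.real univ + 2 * ν.real univ + (tvDist σ ν).toReal) := by
  set δ := (tvDist σ ν).toReal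
  have hC₀ : 0 ≤ C := (abs_nonneg _).trans (hC 0 0)
  have hmean : ∀ x, |∫ y, K x y ∂σ - ∫ y, K x y ∂ν| ≤ C * δ :=
    fun x => abs_integral_sub_le_tvDist σ ν (hK.cont x).stronglyMeasurable (hC x)
  have hout : ∀ (ξ : Measure (Rd d)) [IsFiniteMeasure ξ],
      |∫ x, ∫ y, K x y ∂σ ∂ξ - ∫ x, ∫ y, K x y ∂ν ∂ξ| ≤ C * δ * ξ.real univ := fun ξ _ => by
    rw [← integral_sub (hK.integrable_integral hC ξ σ) (hK.integrable_integral hC ξ ν)]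
    simpa [mul_comm] using norm_integral_le_of_norm_le_const (μ := ξ)
      (f := fun x => ∫ y, K x y ∂σ - ∫ y, K x y ∂ν) (ae_of_all _ hmean)
  have hself : |∫ x, ∫ y, K x y ∂σ ∂σ - ∫ x, ∫ y, K x y ∂σ ∂ν| ≤ C * σ.real univ * δ :=
    abs_integral_sub_le_tvDist σ ν (hK.stronglyMeasurable_integral σ)
      (IsKernel.abs_integral_le hC σ)
  have hmass : C * σ.real univ * δ ≤ C * (ν.real univ + δ) * δ := by
    gcongr
    exact measureReal_univ_le_add_tvDist σ ν
  have h₁ := abs_le.1 (hout μ)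
  have h₂ := abs_le.1 (hout ν)
  have h₃ := abs_le.1 hself
  rw [mmdSqM, mmdSqM, abs_le]
  constructor <;> linarith

theorem exists_fDiv_lt_and_mmdSqM_lt_of_regFDivM_lt {μ ν : Measure (Rd d)} {lam e : ℝ}
    (hlam : 0 < lam) (h : regFDivM K f ν lam μ < ENNReal.ofReal e) :
    ∃ σ : Measure (Rd d), IsFiniteMeasure σ ∧ fDiv f σ ν < ENNReal.ofReal e ∧
      mmdSqM K μ σ < 2 * lam * e := by
  obtain ⟨⟨σ, hσ⟩, hlt⟩ := iInf_lt_iff.1 h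
  refine ⟨σ, hσ, le_self_add.trans_lt hlt, ?_⟩
  have hmmd := (ENNReal.ofReal_lt_ofReal_iff'.1 (le_add_self.trans_lt hlt)).1
  rwa [div_lt_iff₀ (by positivity), mul_comm] at hmmd

theorem mmdSqM_nonpos_of_regFDivM_eq_zero (hK : IsKernel K) (hf : IsEntropy f)
    (hmin : UniqueMinOne f) {lam : ℝ} (hlam : 0 < lam) (μ ν : Measure (Rd d))
    [IsFiniteMeasure μ] [IsFiniteMeasure ν] (h : regFDivM K f ν lam μ = 0) :
    mmdSqM K μ ν ≤ 0 := by
  obtain ⟨C, hC⟩ := hK.exists_abs_le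
  have hC₀ : 0 ≤ C := (abs_nonneg _).trans (hC 0 0)
  set A := C * (2 * μ.real univ + 2 * ν.real univ + 1) with hA_def
  have hA : 0 ≤ A := by positivity
  refine le_of_forall_pos_le_add fun ε hε => ?_
  obtain ⟨e, he, htv⟩ :=
    exists_tvDist_le_of_fDiv_lt hf hmin ν (η := min 1 (ε / (2 * (A + 1)))) (by positivity)
  obtain ⟨σ, _, hσf, hσm⟩ := exists_fDiv_lt_and_mmdSqM_lt_of_regFDivM_lt (K := K) (μ := μ)
    (e := min e (ε / (4 * lam))) hlam (by rw [h]; positivity)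
  have hδ := ENNReal.toReal_le_of_le_ofReal (by positivity)
    (htv σ (hσf.trans_le (ENNReal.ofReal_le_ofReal (min_le_left _ _))))
  set δ := (tvDist σ ν).toReal
  have hδ₀ : 0 ≤ δ := ENNReal.toReal_nonneg
  have hδ₁ : δ ≤ 1 := hδ.trans (min_le_left _ _)
  have hperturb : C * δ * (2 * μ.real univ + 2 * ν.real univ + δ) ≤ ε / 2 :=
    calc C * δ * (2 * μ.real univ + 2 * ν.real univ + δ)
        ≤ (A + 1) * δ := by nlinarith [mul_le_mul_of_nonneg_left hδ₁ (mul_nonneg hC₀ hδ₀)]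
      _ ≤ (A + 1) * (ε / (2 * (A + 1))) := by gcongr; exact hδ.trans (min_le_right _ _)
      _ = ε / 2 := by field_simp
  have hσ : mmdSqM K μ σ ≤ ε / 2 :=
    calc mmdSqM K μ σ ≤ 2 * lam * (ε / (4 * lam)) := by
          nlinarith [min_le_right e (ε / (4 * lam))]
      _ = ε / 2 := by field_simp; ring
  linarith [(abs_le.1 (abs_mmdSqM_sub_le hK hC μ σ ν)).1]

theorem Characteristic.eq_of_mmdSqM_nonpos (hchar : Characteristic K) (hK : IsKernel K)
    {μ ν : Measure (Rd d)} [IsFiniteMeasure μ] [IsFiniteMeasure ν] (h : mmdSqM K μ ν ≤ 0) :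
    μ = ν :=
  Measure.toSignedMeasure_eq_toSignedMeasure_iff.1 <| hchar _ _ <|
    Real.sqrt_eq_zero'.2 <| (hK.mmdSq_toSignedMeasure μ ν).trans_le h

theorem regFDivM_self (hf : f 1 = 0) (K : Rd d → Rd d → ℝ) (lam : ℝ) (μ : Measure (Rd d))
    [IsFiniteMeasure μ] : regFDivM K f μ lam μ = 0 := by
  refine nonpos_iff_eq_zero.1 ((iInf_le _ ⟨μ, inferInstance⟩).trans_eq ?_)
  rw [fDiv_self hf, mmdSqM]
  ring_nf
  simp

end Regularized

/-- The MMD-regularized `f`-divergence is a divergence: it is nonnegative and vanishes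
exactly on the diagonal. -/
theorem regFDiv_is_divergence {d : ℕ} (K : Rd d → Rd d → ℝ)
    (hK : IsKernel K) (hchar : Characteristic K)
    (f : ℝ → ℝ≥0∞) (hf : IsEntropy f) (hmin : UniqueMinOne f)
    (lam : ℝ) (hlam : 0 < lam)
    (μ ν : Measure (Rd d)) [IsFiniteMeasure μ] [IsFiniteMeasure ν] :
    0 ≤ regFDivM K f ν lam μ ∧ (regFDivM K f ν lam μ = 0 ↔ μ = ν) := by
  refine ⟨zero_le, fun h => ?_, fun h => ?_⟩
  · exact hchar.eq_of_mmdSqM_nonpos hK (mmdSqM_nonpos_of_regFDivM_eq_zero hK hf hmin hlam μ ν h)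
  · subst h
    exact regFDivM_self hf.one_eq_zero K lam μ
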